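/- arXiv:1704.00525 — 3 statements merged into one kernel-verified Lean document; each statement's English description precedes it below -/
import Mathlib

section
/- Fix a finite-dimensional subspace V^h ⊂ H^1_⋄(Ω). If a sequence Γ_n = (Q_n, f_n, g_n) ⊂ H_ad converges weakly to Γ = (Q, f, g) in L²_sym(Ω) × L²(Ω) × L²(∂Ω) (with Q_n ⇀ Q weakly* in L^∞_sym), then the discrete Galerkin solutions U^h_{Γ_n} ∈ V^h, defined by ∫_Ω Q_n ∇U^h_{Γ_n}·∇φ^h = (f_n, φ^h) + ⟨g_n, γφ^h⟩ for all φ^h ∈ V^h, converge to U^h_Γ in the H^1(Ω)-norm. -/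
open InnerProductSpace Filter Topology

/-!
The error `e_n = U_n - U` lies in `V^h` and satisfies `a_{Q_n}(e_n, v) = r_n(v)` for `v ∈ V^h`,
where `r_n` is the residual of `U` in the problem with data `Γ_n`. Ellipticity together with the
Poincaré–Friedrichs inequality makes the forms `a_{Q_n}` uniformly coercive, so
`‖e_n‖ ≤ ‖r_n|_{V^h}‖ / c`. Weak convergence of the data gives `r_n → r = 0` pointwise on `V^h`,
and on a finite-dimensional space pointwise convergence of functionals is norm convergence.
-/

theorem ContinuousLinearMap.tendsto_of_tendsto_apply_of_finiteDimensional
    {α 𝕜 E F : Type*} [NontriviallyNormedField 𝕜] [CompleteSpace 𝕜]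
    [NormedAddCommGroup E] [NormedSpace 𝕜 E] [FiniteDimensional 𝕜 E]
    [NormedAddCommGroup F] [NormedSpace 𝕜 F]
    {l : Filter α} {T : α → E →L[𝕜] F} {T₀ : E →L[𝕜] F}
    (h : ∀ x, Tendsto (fun a => T a x) l (𝓝 (T₀ x))) : Tendsto T l (𝓝 T₀) := by
  let b := Module.finBasis 𝕜 E
  obtain ⟨C, -, hC⟩ := b.exists_opNorm_le (F := F)
  have hbasis : Tendsto (fun a => ∑ i, ‖(T a - T₀) (b i)‖) l (𝓝 0) := by
    simpa using tendsto_finsetSum Finset.univ fun i _ =>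
      tendsto_iff_norm_sub_tendsto_zero.1 (h (b i))
  rw [tendsto_iff_norm_sub_tendsto_zero]
  refine squeeze_zero (g := fun a => C * ∑ i, ‖(T a - T₀) (b i)‖) (fun _ => norm_nonneg _)
    (fun a => hC ?_ fun i => ?_) ?_
  · exact Finset.sum_nonneg fun i _ => norm_nonneg _
  · exact Finset.single_le_sum (f := fun i => ‖(T a - T₀) (b i)‖)
      (fun i _ => norm_nonneg _) (Finset.mem_univ i)
  · simpa using hbasis.const_mul C

theorem norm_le_opNorm_div_of_mul_norm_sq_le {E : Type*} [SeminormedAddCommGroup E]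
    [NormedSpace ℝ E] {ℓ : E →L[ℝ] ℝ} {c : ℝ} (hc : 0 < c) {x : E}
    (hx : c * ‖x‖ ^ 2 ≤ ℓ x) : ‖x‖ ≤ ‖ℓ‖ / c := by
  rw [le_div_iff₀ hc]
  rcases (norm_nonneg x).eq_or_lt with hx0 | hx0
  · rw [← hx0, zero_mul]
    exact norm_nonneg ℓ
  · refine le_of_mul_le_mul_right ?_ hx0
    calc ‖x‖ * c * ‖x‖ = c * ‖x‖ ^ 2 := by ring
      _ ≤ ℓ x := hx
      _ ≤ ‖ℓ x‖ := Real.le_norm_self _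
      _ ≤ ‖ℓ‖ * ‖x‖ := ℓ.le_opNorm x

theorem div_mul_norm_sq_le_of_poincare {E F : Type*} [SeminormedAddCommGroup E]
    [SeminormedAddCommGroup F] {A : E → F} {B : F → F → ℝ} {q K : ℝ} (hq : 0 ≤ q) (hK : 0 < K)
    (hB : ∀ v, q * ‖v‖ ^ 2 ≤ B v v) (hA : ∀ x, ‖x‖ ^ 2 ≤ K * ‖A x‖ ^ 2) (x : E) :
    q / K * ‖x‖ ^ 2 ≤ B (A x) (A x) :=
  calc q / K * ‖x‖ ^ 2 ≤ q / K * (K * ‖A x‖ ^ 2) := by gcongr; exact hA x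
    _ = q * ‖A x‖ ^ 2 := by field_simp
    _ ≤ B (A x) (A x) := hB (A x)

section Galerkin

variable {Hd G L2 L2b MQ : Type*}
  [NormedAddCommGroup Hd] [NormedSpace ℝ Hd] [NormedAddCommGroup G] [NormedSpace ℝ G]
  [NormedAddCommGroup L2] [InnerProductSpace ℝ L2]
  [NormedAddCommGroup L2b] [InnerProductSpace ℝ L2b]
  [NormedAddCommGroup MQ] [NormedSpace ℝ MQ]
  (grad : Hd →L[ℝ] G) (ι : Hd →L[ℝ] L2) (γ : Hd →L[ℝ] L2b)
  (QF : MQ →L[ℝ] G →L[ℝ] G →L[ℝ] ℝ)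

noncomputable def galerkinResidual (Q : MQ) (f : L2) (g : L2b) (U : Hd) : Hd →L[ℝ] ℝ :=
  (innerSL ℝ f).comp ι + (innerSL ℝ g).comp γ - (QF Q (grad U)).comp grad

@[simp]
theorem galerkinResidual_apply (Q : MQ) (f : L2) (g : L2b) (U v : Hd) :
    galerkinResidual grad ι γ QF Q f g U v =
      ⟪f, ι v⟫_ℝ + ⟪g, γ v⟫_ℝ - QF Q (grad U) (grad v) :=
  rfl

theorem form_sub_eq_galerkinResidual {Q : MQ} {f : L2} {g : L2b} {U' : Hd} (U : Hd) {v : Hd}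
    (hU' : QF Q (grad U') (grad v) = ⟪f, ι v⟫_ℝ + ⟪g, γ v⟫_ℝ) :
    QF Q (grad (U' - U)) (grad v) = galerkinResidual grad ι γ QF Q f g U v := by
  rw [galerkinResidual_apply, ← hU', map_sub, map_sub, sub_apply]

theorem tendsto_galerkinResidual_apply {α : Type*} {l : Filter α}
    {Qn : α → MQ} {fn : α → L2} {gn : α → L2b} {Q : MQ} {f : L2} {g : L2b}
    (hQw : ∀ v w : G, Tendsto (fun n => QF (Qn n) v w) l (𝓝 (QF Q v w)))
    (hfw : ∀ ψ : L2, Tendsto (fun n => ⟪fn n, ψ⟫_ℝ) l (𝓝 ⟪f, ψ⟫_ℝ))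
    (hgw : ∀ ψ : L2b, Tendsto (fun n => ⟪gn n, ψ⟫_ℝ) l (𝓝 ⟪g, ψ⟫_ℝ)) (U v : Hd) :
    Tendsto (fun n => galerkinResidual grad ι γ QF (Qn n) (fn n) (gn n) U v) l
      (𝓝 (galerkinResidual grad ι γ QF Q f g U v)) := by
  simp only [galerkinResidual_apply]
  exact ((hfw (ι v)).add (hgw (γ v))).sub (hQw (grad U) (grad v))

end Galerkin

theorem stmt6_general
    (Hd G L2 L2b MQ : Type*)
    [NormedAddCommGroup Hd] [InnerProductSpace ℝ Hd]
    [NormedAddCommGroup G] [InnerProductSpace ℝ G]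
    [NormedAddCommGroup L2] [InnerProductSpace ℝ L2]
    [NormedAddCommGroup L2b] [InnerProductSpace ℝ L2b]
    [NormedAddCommGroup MQ] [NormedSpace ℝ MQ]
    (grad : Hd →L[ℝ] G) (ι : Hd →L[ℝ] L2) (γ : Hd →L[ℝ] L2b)
    (QF : MQ →L[ℝ] G →L[ℝ] G →L[ℝ] ℝ)
    (q qbar CΩ : ℝ) (hq : 0 < q) (hCΩ : 0 < CΩ)
    (Qad : Set MQ)
    (hell : ∀ Q ∈ Qad, ∀ v : G,
      q * ‖v‖ ^ 2 ≤ QF Q v v ∧ QF Q v v ≤ qbar * ‖v‖ ^ 2)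
    (hPF : ∀ φ : Hd, ‖φ‖ ^ 2 ≤ (1 + CΩ) / CΩ * ‖grad φ‖ ^ 2)
    (Vh : Submodule ℝ Hd) (hfin : FiniteDimensional ℝ Vh)
    (Qn : ℕ → MQ) (fn : ℕ → L2) (gn : ℕ → L2b)
    (Q : MQ) (f : L2) (g : L2b)
    (hQn : ∀ n, Qn n ∈ Qad)
    -- weak* convergence `Q_n ⇀* Q` tested against the relevant quadratic forms
    (hQw : ∀ v w : G, Tendsto (fun n => QF (Qn n) v w) atTop (𝓝 (QF Q v w)))
    -- weak convergence `f_n ⇀ f` in `L²(Ω)` and `g_n ⇀ g` in `L²(∂Ω)`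
    (hfw : ∀ ψ : L2, Tendsto (fun n => ⟪fn n, ψ⟫_ℝ) atTop (𝓝 ⟪f, ψ⟫_ℝ))
    (hgw : ∀ ψ : L2b, Tendsto (fun n => ⟪gn n, ψ⟫_ℝ) atTop (𝓝 ⟪g, ψ⟫_ℝ))
    (Un : ℕ → Hd) (U0 : Hd)
    (hUn : ∀ n, Un n ∈ Vh ∧ ∀ v ∈ Vh,
      QF (Qn n) (grad (Un n)) (grad v) = ⟪fn n, ι v⟫_ℝ + ⟪gn n, γ v⟫_ℝ)
    (hU0 : U0 ∈ Vh ∧ ∀ v ∈ Vh,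
      QF Q (grad U0) (grad v) = ⟪f, ι v⟫_ℝ + ⟪g, γ v⟫_ℝ) :
    Tendsto (fun n => ‖Un n - U0‖) atTop (𝓝 0) := by
  have := hfin
  set c := q / ((1 + CΩ) / CΩ)
  have hc : 0 < c := by positivity
  let ℓ : ℕ → Vh →L[ℝ] ℝ := fun n =>
    (galerkinResidual grad ι γ QF (Qn n) (fn n) (gn n) U0).comp Vh.subtypeL
  have hℓ : Tendsto ℓ atTop (𝓝 0) := by
    have hU0_residual : (galerkinResidual grad ι γ QF Q f g U0).comp Vh.subtypeL = 0 := by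
      ext v
      simp [hU0.2 v v.2]
    rw [← hU0_residual]
    exact ContinuousLinearMap.tendsto_of_tendsto_apply_of_finiteDimensional fun v =>
      tendsto_galerkinResidual_apply grad ι γ QF hQw hfw hgw U0 v
  have herror : ∀ n, ‖Un n - U0‖ ≤ ‖ℓ n‖ / c := fun n => by
    let e : Vh := ⟨Un n - U0, sub_mem (hUn n).1 hU0.1⟩
    refine norm_le_opNorm_div_of_mul_norm_sq_le hc (x := e) ?_
    calc c * ‖e‖ ^ 2 ≤ QF (Qn n) (grad e) (grad e) :=
          div_mul_norm_sq_le_of_poincare hq.le (by positivity)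
            (fun v => (hell _ (hQn n) v).1) hPF e
      _ = ℓ n e := form_sub_eq_galerkinResidual grad ι γ QF U0 ((hUn n).2 e e.2)
  refine squeeze_zero (fun n => norm_nonneg _) herror ?_
  -- without `E :=`, unification of the norm topology on `Vh →L[ℝ] ℝ` fails
  simpa only [ContinuousLinearMap.opNorm_zero, zero_div] using
    (Tendsto.norm (E := Vh →L[ℝ] ℝ) hℓ).div_const c

/-- for a fixed finite-dimensional FE subspace `Vh ⊂ H¹_⋄(Ω)`, if
`Γ_n = (Q_n,f_n,g_n) ⊂ H_ad` converges weakly (weakly* in the `Q`-component) to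
`Γ = (Q,f,g)`, then the discrete Galerkin solutions `U^h_{Γ_n} ∈ Vh` converge
to `U^h_Γ` in the `H¹(Ω)`-norm. -/
theorem stmt6
    (Hd G L2 L2b MQ : Type*)
    [NormedAddCommGroup Hd] [InnerProductSpace ℝ Hd] [CompleteSpace Hd]
    [NormedAddCommGroup G] [InnerProductSpace ℝ G]
    [NormedAddCommGroup L2] [InnerProductSpace ℝ L2]
    [NormedAddCommGroup L2b] [InnerProductSpace ℝ L2b]
    [NormedAddCommGroup MQ] [NormedSpace ℝ MQ]
    (grad : Hd →L[ℝ] G) (ι : Hd →L[ℝ] L2) (γ : Hd →L[ℝ] L2b)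
    (QF : MQ →L[ℝ] G →L[ℝ] G →L[ℝ] ℝ)
    (q qbar CΩ : ℝ) (hq : 0 < q) (hqq : q ≤ qbar) (hCΩ : 0 < CΩ)
    (Qad : Set MQ)
    (hell : ∀ Q ∈ Qad, ∀ v : G,
      q * ‖v‖ ^ 2 ≤ QF Q v v ∧ QF Q v v ≤ qbar * ‖v‖ ^ 2)
    (hPF : ∀ φ : Hd, ‖φ‖ ^ 2 ≤ (1 + CΩ) / CΩ * ‖grad φ‖ ^ 2)
    (Vh : Submodule ℝ Hd) (hfin : FiniteDimensional ℝ Vh)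
    (Qn : ℕ → MQ) (fn : ℕ → L2) (gn : ℕ → L2b)
    (Q : MQ) (f : L2) (g : L2b)
    (hQn : ∀ n, Qn n ∈ Qad) (hQ : Q ∈ Qad)
    -- weak* convergence `Q_n ⇀* Q` tested against the relevant quadratic forms
    (hQw : ∀ v w : G, Tendsto (fun n => QF (Qn n) v w) atTop (𝓝 (QF Q v w)))
    -- weak convergence `f_n ⇀ f` in `L²(Ω)` and `g_n ⇀ g` in `L²(∂Ω)`
    (hfw : ∀ ψ : L2, Tendsto (fun n => ⟪fn n, ψ⟫_ℝ) atTop (𝓝 ⟪f, ψ⟫_ℝ))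
    (hgw : ∀ ψ : L2b, Tendsto (fun n => ⟪gn n, ψ⟫_ℝ) atTop (𝓝 ⟪g, ψ⟫_ℝ))
    (Un : ℕ → Hd) (U0 : Hd)
    (hUn : ∀ n, Un n ∈ Vh ∧ ∀ v ∈ Vh,
      QF (Qn n) (grad (Un n)) (grad v) = ⟪fn n, ι v⟫_ℝ + ⟪gn n, γ v⟫_ℝ)
    (hU0 : U0 ∈ Vh ∧ ∀ v ∈ Vh,
      QF Q (grad U0) (grad v) = ⟪f, ι v⟫_ℝ + ⟪g, γ v⟫_ℝ) :
    Tendsto (fun n => ‖Un n - U0‖) atTop (𝓝 0) :=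
  stmt6_general Hd G L2 L2b MQ grad ι γ QF q qbar CΩ hq hCΩ Qad hell hPF Vh hfin Qn fn gn Q f g hQn
    hQw hfw hgw Un U0 hUn hU0
end

section
/- (Minimum-norm characterization via source condition) Let Γ̄ = (Q̄,f̄,ḡ) ∈ I(Φ†) and suppose there exists w* ∈ (H^1_⋄(Ω))* with (U'_{Γ̄})* w* = Γ̄ (the adjoint of the Fréchet derivative of the solution map at Γ̄ applied to w* equals Γ̄, with Q̄ identified as an element of (L^∞_sym(Ω))* via integration). Then ⟨Γ̄, Γ − Γ̄⟩_{L²_sym × L² × L²(∂Ω)} = 0 for all Γ ∈ I(Φ†), and hence Γ̄ is the unique minimum-norm solution: ‖Γ̄‖ ≤ ‖Γ‖ for all Γ ∈ I(Φ†), with equality only for Γ = Γ̄. -/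
/-!
Two parameter triples `Γ, Γ̄ ∈ I(Φ†)` solve the same weak Neumann problem with the same
solution `Φ†`, and that problem is linear in the parameters, so `Γ - Γ̄` has zero residual.
By the equation defining `U'_{Γ̄}`, this says that `U'_{Γ̄}(Γ - Γ̄)` vanishes when tested
against `W`, and the source condition identifies that test with `⟨Γ̄, Γ - Γ̄⟩`.
Orthogonality of `Γ̄` and `Γ - Γ̄` then gives `‖Γ‖² = ‖Γ̄‖² + ‖Γ - Γ̄‖²` (Pythagoras).
-/

open InnerProductSpace

theorem Prod.eq_of_norm_sub_sq_sum_eq_zero {E F K : Type*} [NormedAddCommGroup E]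
    [NormedAddCommGroup F] [NormedAddCommGroup K] {a b : E × F × K}
    (h : ‖a.1 - b.1‖ ^ 2 + ‖a.2.1 - b.2.1‖ ^ 2 + ‖a.2.2 - b.2.2‖ ^ 2 = 0) : a = b := by
  obtain ⟨h₁₂, h₃⟩ := (add_eq_zero_iff_of_nonneg (by positivity) (by positivity)).1 h
  obtain ⟨h₁, h₂⟩ := (add_eq_zero_iff_of_nonneg (by positivity) (by positivity)).1 h₁₂
  simp only [sq_eq_zero_iff, norm_sub_eq_zero_iff] at h₁ h₂ h₃
  exact Prod.ext h₁ (Prod.ext h₂ h₃)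

section MinimumNorm

variable {E F K : Type*}
  [NormedAddCommGroup E] [InnerProductSpace ℝ E]
  [NormedAddCommGroup F] [InnerProductSpace ℝ F]
  [NormedAddCommGroup K] [InnerProductSpace ℝ K]

theorem norm_sq_eq_norm_sq_add_inner_add_norm_sub_sq (x y : E) :
    ‖y‖ ^ 2 = ‖x‖ ^ 2 + 2 * ⟪x, y - x⟫_ℝ + ‖y - x‖ ^ 2 := by
  simpa only [add_sub_cancel] using norm_add_sq_real x (y - x)

theorem sum_norm_sq_le_and_eq_of_inner_sub_eq_zero {x y : E × F × K}
    (h : ⟪x.1, y.1 - x.1⟫_ℝ + ⟪x.2.1, y.2.1 - x.2.1⟫_ℝ + ⟪x.2.2, y.2.2 - x.2.2⟫_ℝ = 0) :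
    ‖x.1‖ ^ 2 + ‖x.2.1‖ ^ 2 + ‖x.2.2‖ ^ 2 ≤ ‖y.1‖ ^ 2 + ‖y.2.1‖ ^ 2 + ‖y.2.2‖ ^ 2 ∧
      (‖y.1‖ ^ 2 + ‖y.2.1‖ ^ 2 + ‖y.2.2‖ ^ 2 = ‖x.1‖ ^ 2 + ‖x.2.1‖ ^ 2 + ‖x.2.2‖ ^ 2 →
        y = x) := by
  have pythagoras : ‖y.1‖ ^ 2 + ‖y.2.1‖ ^ 2 + ‖y.2.2‖ ^ 2
      = ‖x.1‖ ^ 2 + ‖x.2.1‖ ^ 2 + ‖x.2.2‖ ^ 2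
        + (‖y.1 - x.1‖ ^ 2 + ‖y.2.1 - x.2.1‖ ^ 2 + ‖y.2.2 - x.2.2‖ ^ 2) := by
    rw [norm_sq_eq_norm_sq_add_inner_add_norm_sub_sq x.1 y.1,
      norm_sq_eq_norm_sq_add_inner_add_norm_sub_sq x.2.1 y.2.1,
      norm_sq_eq_norm_sq_add_inner_add_norm_sub_sq x.2.2 y.2.2]
    linarith
  refine ⟨?_, fun heq => Prod.eq_of_norm_sub_sq_sum_eq_zero (by linarith)⟩
  linarith [sq_nonneg ‖y.1 - x.1‖, sq_nonneg ‖y.2.1 - x.2.1‖, sq_nonneg ‖y.2.2 - x.2.2‖]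

end MinimumNorm

section WeakSolution

variable {Hd G L2 L2b MQ : Type*}
  [NormedAddCommGroup Hd] [NormedSpace ℝ Hd]
  [NormedAddCommGroup G] [NormedSpace ℝ G]
  [NormedAddCommGroup L2] [InnerProductSpace ℝ L2]
  [NormedAddCommGroup L2b] [InnerProductSpace ℝ L2b]
  [NormedAddCommGroup MQ] [InnerProductSpace ℝ MQ]
  (grad : Hd →L[ℝ] G) (ι : Hd →L[ℝ] L2) (γ : Hd →L[ℝ] L2b)
  (QF : MQ →L[ℝ] G →L[ℝ] G →L[ℝ] ℝ)

/-- `Φ` is the weak solution of `-div (Q ∇Φ) = f` in `Ω`, `Q ∇Φ · ν = g` on `∂Ω`. -/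
def IsWeakSolution (Φ : Hd) (Γ : MQ × L2 × L2b) : Prop :=
  ∀ φ : Hd, QF Γ.1 (grad Φ) (grad φ) = ⟪Γ.2.1, ι φ⟫_ℝ + ⟪Γ.2.2, γ φ⟫_ℝ

theorem IsWeakSolution.residual_sub_eq_zero {Φ : Hd} {Γ Γ' : MQ × L2 × L2b}
    (hΓ : IsWeakSolution grad ι γ QF Φ Γ) (hΓ' : IsWeakSolution grad ι γ QF Φ Γ') (φ : Hd) :
    -QF (Γ - Γ').1 (grad Φ) (grad φ) + ⟪(Γ - Γ').2.1, ι φ⟫_ℝ + ⟪(Γ - Γ').2.2, γ φ⟫_ℝ = 0 := by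
  simp only [Prod.fst_sub, Prod.snd_sub, map_sub, sub_apply, inner_sub_left]
  linarith [hΓ φ, hΓ' φ]

theorem inner_sub_eq_zero_of_sourceCondition {Φ W : Hd} {Γ Γbar : MQ × L2 × L2b}
    (hΓ : IsWeakSolution grad ι γ QF Φ Γ) (hΓbar : IsWeakSolution grad ι γ QF Φ Γbar)
    (Dbar : (MQ × L2 × L2b) →L[ℝ] Hd)
    (hDbar : ∀ lam : MQ × L2 × L2b, ∀ φ : Hd,
      QF Γbar.1 (grad (Dbar lam)) (grad φ)
        = - QF lam.1 (grad Φ) (grad φ) + ⟪lam.2.1, ι φ⟫_ℝ + ⟪lam.2.2, γ φ⟫_ℝ)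
    (hsource : ∀ lam : MQ × L2 × L2b,
      ⟪Γbar.1, lam.1⟫_ℝ + ⟪Γbar.2.1, lam.2.1⟫_ℝ + ⟪Γbar.2.2, lam.2.2⟫_ℝ
        = QF Γbar.1 (grad (Dbar lam)) (grad W)) :
    ⟪Γbar.1, Γ.1 - Γbar.1⟫_ℝ + ⟪Γbar.2.1, Γ.2.1 - Γbar.2.1⟫_ℝ
      + ⟪Γbar.2.2, Γ.2.2 - Γbar.2.2⟫_ℝ = 0 := by
  have := hsource (Γ - Γbar)
  rwa [hDbar, hΓ.residual_sub_eq_zero grad ι γ QF hΓbar W] at this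

end WeakSolution

theorem stmt13_general
    (Hd G L2 L2b MQ : Type*)
    [NormedAddCommGroup Hd] [InnerProductSpace ℝ Hd]
    [NormedAddCommGroup G] [InnerProductSpace ℝ G]
    [NormedAddCommGroup L2] [InnerProductSpace ℝ L2]
    [NormedAddCommGroup L2b] [InnerProductSpace ℝ L2b]
    [NormedAddCommGroup MQ] [InnerProductSpace ℝ MQ]
    (grad : Hd →L[ℝ] G) (ι : Hd →L[ℝ] L2) (γ : Hd →L[ℝ] L2b)
    (QF : MQ →L[ℝ] G →L[ℝ] G →L[ℝ] ℝ)
    (Had : Set (MQ × L2 × L2b))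
    (Φdag : Hd)
    -- `I(Φ†)`: admissible triples whose weak Neumann solution is `Φ†`
    (I : Set (MQ × L2 × L2b))
    (hI : I = {Γ ∈ Had | ∀ φ : Hd,
      QF Γ.1 (grad Φdag) (grad φ) = ⟪Γ.2.1, ι φ⟫_ℝ + ⟪Γ.2.2, γ φ⟫_ℝ})
    (Γbar : MQ × L2 × L2b) (hΓbar : Γbar ∈ I)
    -- `Dbar λ = U'_{Γ̄}(λ)`: the Fréchet derivative of the solution map at `Γ̄`
    (Dbar : (MQ × L2 × L2b) →L[ℝ] Hd)
    (hDbar : ∀ lam : MQ × L2 × L2b, ∀ φ : Hd,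
      QF Γbar.1 (grad (Dbar lam)) (grad φ)
        = - QF lam.1 (grad Φdag) (grad φ)
          + ⟪lam.2.1, ι φ⟫_ℝ + ⟪lam.2.2, γ φ⟫_ℝ)
    -- source condition `(U'_{Γ̄})* w* = Γ̄`, with `w*` represented by `W`
    (W : Hd)
    (hsource : ∀ lam : MQ × L2 × L2b,
      ⟪Γbar.1, lam.1⟫_ℝ + ⟪Γbar.2.1, lam.2.1⟫_ℝ + ⟪Γbar.2.2, lam.2.2⟫_ℝ
        = QF Γbar.1 (grad (Dbar lam)) (grad W)) :
    (∀ Γ ∈ I,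
        ⟪Γbar.1, Γ.1 - Γbar.1⟫_ℝ + ⟪Γbar.2.1, Γ.2.1 - Γbar.2.1⟫_ℝ
          + ⟪Γbar.2.2, Γ.2.2 - Γbar.2.2⟫_ℝ = 0) ∧
    (∀ Γ ∈ I,
        ‖Γbar.1‖ ^ 2 + ‖Γbar.2.1‖ ^ 2 + ‖Γbar.2.2‖ ^ 2
          ≤ ‖Γ.1‖ ^ 2 + ‖Γ.2.1‖ ^ 2 + ‖Γ.2.2‖ ^ 2 ∧
        (‖Γ.1‖ ^ 2 + ‖Γ.2.1‖ ^ 2 + ‖Γ.2.2‖ ^ 2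
            = ‖Γbar.1‖ ^ 2 + ‖Γbar.2.1‖ ^ 2 + ‖Γbar.2.2‖ ^ 2 → Γ = Γbar)) := by
  subst hI
  have orthogonal : ∀ Γ ∈ {Γ ∈ Had | IsWeakSolution grad ι γ QF Φdag Γ},
      ⟪Γbar.1, Γ.1 - Γbar.1⟫_ℝ + ⟪Γbar.2.1, Γ.2.1 - Γbar.2.1⟫_ℝ
        + ⟪Γbar.2.2, Γ.2.2 - Γbar.2.2⟫_ℝ = 0 := fun Γ hΓ =>
    inner_sub_eq_zero_of_sourceCondition grad ι γ QF hΓ.2 hΓbar.2 Dbar hDbar hsource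
  exact ⟨orthogonal, fun Γ hΓ => sum_norm_sq_le_and_eq_of_inner_sub_eq_zero (orthogonal Γ hΓ)⟩

/-- minimum-norm characterization via source condition: if
`Γ̄ ∈ I(Φ†)` satisfies the source condition `(U'_{Γ̄})* w* = Γ̄` (with `w*`
represented, via the equivalent inner product `[u,v] = ∫ Q̄∇u·∇v` on
`H¹_⋄(Ω)`, by some `W ∈ H¹_⋄(Ω)`), then `⟨Γ̄, Γ − Γ̄⟩ = 0` for all
`Γ ∈ I(Φ†)` and `Γ̄` is the unique minimum-norm solution. -/
theorem stmt13
    (Hd G L2 L2b MQ : Type*)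
    [NormedAddCommGroup Hd] [InnerProductSpace ℝ Hd]
    [NormedAddCommGroup G] [InnerProductSpace ℝ G]
    [NormedAddCommGroup L2] [InnerProductSpace ℝ L2]
    [NormedAddCommGroup L2b] [InnerProductSpace ℝ L2b]
    [NormedAddCommGroup MQ] [InnerProductSpace ℝ MQ]
    (grad : Hd →L[ℝ] G) (ι : Hd →L[ℝ] L2) (γ : Hd →L[ℝ] L2b)
    (QF : MQ →L[ℝ] G →L[ℝ] G →L[ℝ] ℝ)
    (Qad : Set MQ)
    (Had : Set (MQ × L2 × L2b)) (hHad : Had = {Γ | Γ.1 ∈ Qad})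
    (Φdag : Hd)
    -- `I(Φ†)`: admissible triples whose weak Neumann solution is `Φ†`
    (I : Set (MQ × L2 × L2b))
    (hI : I = {Γ ∈ Had | ∀ φ : Hd,
      QF Γ.1 (grad Φdag) (grad φ) = ⟪Γ.2.1, ι φ⟫_ℝ + ⟪Γ.2.2, γ φ⟫_ℝ})
    (Γbar : MQ × L2 × L2b) (hΓbar : Γbar ∈ I)
    -- `Dbar λ = U'_{Γ̄}(λ)`: the Fréchet derivative of the solution map at `Γ̄`
    (Dbar : (MQ × L2 × L2b) →L[ℝ] Hd)
    (hDbar : ∀ lam : MQ × L2 × L2b, ∀ φ : Hd,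
      QF Γbar.1 (grad (Dbar lam)) (grad φ)
        = - QF lam.1 (grad Φdag) (grad φ)
          + ⟪lam.2.1, ι φ⟫_ℝ + ⟪lam.2.2, γ φ⟫_ℝ)
    -- source condition `(U'_{Γ̄})* w* = Γ̄`, with `w*` represented by `W`
    (W : Hd)
    (hsource : ∀ lam : MQ × L2 × L2b,
      ⟪Γbar.1, lam.1⟫_ℝ + ⟪Γbar.2.1, lam.2.1⟫_ℝ + ⟪Γbar.2.2, lam.2.2⟫_ℝ
        = QF Γbar.1 (grad (Dbar lam)) (grad W)) :
    (∀ Γ ∈ I,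
        ⟪Γbar.1, Γ.1 - Γbar.1⟫_ℝ + ⟪Γbar.2.1, Γ.2.1 - Γbar.2.1⟫_ℝ
          + ⟪Γbar.2.2, Γ.2.2 - Γbar.2.2⟫_ℝ = 0) ∧
    (∀ Γ ∈ I,
        ‖Γbar.1‖ ^ 2 + ‖Γbar.2.1‖ ^ 2 + ‖Γbar.2.2‖ ^ 2
          ≤ ‖Γ.1‖ ^ 2 + ‖Γ.2.1‖ ^ 2 + ‖Γ.2.2‖ ^ 2 ∧
        (‖Γ.1‖ ^ 2 + ‖Γ.2.1‖ ^ 2 + ‖Γ.2.2‖ ^ 2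
            = ‖Γbar.1‖ ^ 2 + ‖Γbar.2.1‖ ^ 2 + ‖Γbar.2.2‖ ^ 2 → Γ = Γbar)) :=
  stmt13_general Hd G L2 L2b MQ grad ι γ QF Had Φdag I hI Γbar hΓbar Dbar hDbar W hsource
end

section
/- Let Γ† = (Q†,f†,g†) be the exact coefficient with state Φ† = U_{Γ†}, and let z_δ ∈ L²(Ω) satisfy ‖Φ† − z_δ‖_{L²(Ω)} ≤ δ. Then the discrete energy misfit at the exact coefficient satisfies J^h_δ(Γ†) ≤ C(h^{-2}δ² + (χ^h_{Φ†})² + (β^h)²), where χ^h_{Φ†} := ‖Φ† − Π^hΦ†‖_{H^1(Ω)}, β^h := ‖U_{Γ†} − U^h_{Γ†}‖_{H^1(Ω)}, and C is independent of h and δ; this uses the inverse inequality ‖φ^h‖_{H^1} ≤ Ch^{-1}‖φ^h‖_{L²} on the piecewise linear FE space and the L²- and H^1-stability of the Clément interpolation Π^h. -/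
/-!
Write `U^h − Π^h z_δ = −(Φ† − U^h) + (Φ† − Π^hΦ†) + Π^h(Φ† − z_δ)`. The first two terms have
`H¹`-norms `β^h` and `χ^h_{Φ†}`. The last lies in the finite element space, so the inverse
inequality followed by the `L²`-stability of `Π^h` bounds its `H¹`-norm by `C h⁻¹ δ`.
-/

theorem sq_add_add_le_three_mul (a b c : ℝ) : (a + b + c) ^ 2 ≤ 3 * (a ^ 2 + b ^ 2 + c ^ 2) := by
  nlinarith [sq_nonneg (a - b), sq_nonneg (b - c), sq_nonneg (a - c)]

theorem norm_sub_map_le_add_add {E F G : Type*} [SeminormedAddCommGroup E] [AddCommGroup F]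
    [FunLike G F E] [AddMonoidHomClass G F E] (P : G) (u x : E) (y z : F) :
    ‖u - P z‖ ≤ ‖x - u‖ + ‖x - P y‖ + ‖P (y - z)‖ := by
  have hsplit : u - P z = -(x - u) + (x - P y) + P (y - z) := by
    rw [map_sub]; abel
  rw [hsplit, ← norm_neg (x - u)]
  exact norm_add₃_le

theorem add_add_mul_le_one_add_mul {a b k t : ℝ} (ha : 0 ≤ a) (hb : 0 ≤ b) (hk : 0 ≤ k)
    (ht : 0 ≤ t) : a + b + k * t ≤ (1 + k) * (t + b + a) := by
  nlinarith [mul_nonneg hk ha, mul_nonneg hk hb]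

/-- the discrete energy misfit at the exact coefficient satisfies
`J^h_δ(Γ†) ≤ C(h⁻²δ² + (χ^h_{Φ†})² + (β^h)²)` with `C` independent of `h` and
`δ`, using the inverse inequality on the FE space and the `L²`/`H¹` stability
of the Clément interpolation `Π^h`. Here `H` models `H¹(Ω)`, `L2` models
`L²(Ω)`, `ι` the embedding, `Ph` the Clément interpolation, `Vh` the piecewise
linear FE space, `Uh = U^h_{Γ†}` and `Jval = J^h_δ(Γ†) ≤ q̄‖U^h_{Γ†} − Π^h z_δ‖²_{H¹}`. -/
theorem stmt14
    (H L2 : Type*)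
    [NormedAddCommGroup H] [InnerProductSpace ℝ H]
    [NormedAddCommGroup L2] [InnerProductSpace ℝ L2]
    (ι : H →L[ℝ] L2)
    (qbar CP Cinv : ℝ) (hqbar : 0 < qbar) (hCP : 0 < CP) (hCinv : 0 < Cinv) :
    ∃ C : ℝ, 0 < C ∧
      ∀ (h δ : ℝ), 0 < h → 0 ≤ δ →
      ∀ (Vh : Submodule ℝ H) (Ph : L2 →L[ℝ] H),
        -- Clément stability in `L²(Ω)`
        (∀ z : L2, ‖ι (Ph z)‖ ≤ CP * ‖z‖) →
        -- `Π^h` maps into the FE space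
        (∀ z : L2, Ph z ∈ Vh) →
        -- inverse inequality on the piecewise linear FE space
        (∀ v ∈ Vh, ‖v‖ ≤ Cinv * h⁻¹ * ‖ι v‖) →
      ∀ (Φdag Uh : H) (zδ : L2) (Jval χ β : ℝ),
        Uh ∈ Vh →
        -- measurement accuracy `‖Φ† − z_δ‖_{L²} ≤ δ`
        ‖ι Φdag - zδ‖ ≤ δ →
        -- interpolation and FE errors
        χ = ‖Φdag - Ph (ι Φdag)‖ →
        β = ‖Φdag - Uh‖ →
        -- `J^h_δ(Γ†) ≤ q̄ ‖U^h_{Γ†} − Π^h z_δ‖²_{H¹}` (ellipticity upper bound)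
        Jval ≤ qbar * ‖Uh - Ph zδ‖ ^ 2 →
        Jval ≤ C * (h⁻¹ ^ 2 * δ ^ 2 + χ ^ 2 + β ^ 2) := by
  refine ⟨3 * qbar * (1 + (Cinv * CP) ^ 2), by positivity, ?_⟩
  intro h δ hh hδ Vh Ph hPL2 hPV hinv Φdag Uh zδ Jval χ β _ hmeas hχ hβ hJ
  have hdata : ‖Ph (ι Φdag - zδ)‖ ≤ Cinv * h⁻¹ * (CP * δ) :=
    (hinv _ (hPV _)).trans <| mul_le_mul_of_nonneg_left
      ((hPL2 _).trans (mul_le_mul_of_nonneg_left hmeas hCP.le)) (by positivity)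
  have herr : ‖Uh - Ph zδ‖ ≤ β + χ + Cinv * h⁻¹ * (CP * δ) := by
    subst hχ hβ
    exact (norm_sub_map_le_add_add Ph Uh Φdag (ι Φdag) zδ).trans (by gcongr)
  calc Jval ≤ qbar * ‖Uh - Ph zδ‖ ^ 2 := hJ
    _ ≤ qbar * (β + χ + Cinv * h⁻¹ * (CP * δ)) ^ 2 := by gcongr
    _ ≤ 3 * qbar * (β ^ 2 + χ ^ 2 + (Cinv * CP) ^ 2 * (h⁻¹ ^ 2 * δ ^ 2)) := by
        rw [mul_comm 3 qbar, mul_assoc qbar 3]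
        refine mul_le_mul_of_nonneg_left ?_ hqbar.le
        exact (sq_add_add_le_three_mul β χ (Cinv * h⁻¹ * (CP * δ))).trans_eq (by ring)
    _ ≤ 3 * qbar * ((1 + (Cinv * CP) ^ 2) * (h⁻¹ ^ 2 * δ ^ 2 + χ ^ 2 + β ^ 2)) := by
        gcongr
        exact add_add_mul_le_one_add_mul (sq_nonneg β) (sq_nonneg χ) (sq_nonneg _) (by positivity)
    _ = 3 * qbar * (1 + (Cinv * CP) ^ 2) * (h⁻¹ ^ 2 * δ ^ 2 + χ ^ 2 + β ^ 2) :=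
        (mul_assoc _ _ _).symm
end
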